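/- Let n be divisible by 7 and let G be the balanced blow-up on n vertices of the complement of the Fano plane (7 classes each of size n/7). Then G contains no copy of J_4, and the co-degree of any two vertices in distinct classes is exactly (4/7)n, while the co-degree of any two vertices in the same class is 0; in particular the minimum positive co-degree of G equals (4/7)n. -/
import Mathlib


/-- The seven lines of the Fano plane on vertex set `Fin 7`. -/
def fanoLines : Finset (Finset (Fin 7)) :=
  {{0, 1, 2}, {0, 3, 4}, {0, 5, 6}, {1, 3, 5}, {1, 4, 6}, {2, 3, 6}, {2, 4, 5}}

lemma fano_J4 : ∀ a b1 b2 b3 b4 : Fin 7,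
    ({a,b1,b2} : Finset (Fin 7)).card = 3 → ({a,b1,b3} : Finset (Fin 7)).card = 3 →
    ({a,b1,b4} : Finset (Fin 7)).card = 3 → ({a,b2,b3} : Finset (Fin 7)).card = 3 →
    ({a,b2,b4} : Finset (Fin 7)).card = 3 → ({a,b3,b4} : Finset (Fin 7)).card = 3 →
    ({a,b1,b2} : Finset (Fin 7)) ∉ fanoLines → ({a,b1,b3} : Finset (Fin 7)) ∉ fanoLines →
    ({a,b1,b4} : Finset (Fin 7)) ∉ fanoLines → ({a,b2,b3} : Finset (Fin 7)) ∉ fanoLines →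
    ({a,b2,b4} : Finset (Fin 7)) ∉ fanoLines → ({a,b3,b4} : Finset (Fin 7)) ∉ fanoLines →
    False := by decide

lemma fano_count : ∀ a b : Fin 7, a ≠ b →
    (Finset.univ.filter (fun k => k ≠ a ∧ k ≠ b ∧ ({a,b,k} : Finset (Fin 7)) ∉ fanoLines)).card = 4 := by
  decide

lemma card3_ne : ∀ a b c : Fin 7, ({a,b,c} : Finset (Fin 7)).card = 3 → a ≠ b ∧ a ≠ c ∧ b ≠ c := by
  decide

lemma ne_card3 : ∀ a b c : Fin 7, a ≠ b → a ≠ c → b ≠ c → ({a,b,c} : Finset (Fin 7)).card = 3 := by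
  decide

lemma notline013 : ({0,1,3} : Finset (Fin 7)) ∉ fanoLines := by decide

lemma third_elt {n : ℕ} (e : Finset (Fin n)) (x y : Fin n) (hx : x ∈ e) (hy : y ∈ e)
    (hxy : x ≠ y) (h3 : e.card = 3) : ∃ z, z ≠ x ∧ z ≠ y ∧ e = {x, y, z} := by
  have hsub : ({x, y} : Finset (Fin n)) ⊆ e := by
    intro w hw; simp at hw; rcases hw with h|h <;> subst h <;> assumption
  have h2 : ({x, y} : Finset (Fin n)).card = 2 := by
    rw [Finset.card_insert_of_notMem (by simp [hxy]), Finset.card_singleton]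
  have h1 : (e \ {x, y}).card = 1 := by
    rw [Finset.card_sdiff_of_subset hsub, h2, h3]
  obtain ⟨z, hz⟩ := Finset.card_eq_one.mp h1
  have hzmem : z ∈ e \ ({x, y} : Finset (Fin n)) := by rw [hz]; simp
  rw [Finset.mem_sdiff, Finset.mem_insert, Finset.mem_singleton] at hzmem
  push_neg at hzmem
  refine ⟨z, hzmem.2.1, hzmem.2.2, ?_⟩
  apply Finset.eq_of_subset_of_card_le
  · intro w hw
    by_cases hwz : w ∈ ({x, y} : Finset (Fin n))
    · simp at hwz; rcases hwz with h|h <;> simp [h]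
    · have : w ∈ e \ ({x,y} : Finset (Fin n)) := Finset.mem_sdiff.mpr ⟨hw, hwz⟩
      rw [hz] at this; simp at this; simp [this]
  · rw [h3]
    calc ({x, y, z} : Finset (Fin n)).card ≤ ({y, z} : Finset (Fin n)).card + 1 :=
          Finset.card_insert_le _ _
      _ ≤ ({z} : Finset (Fin n)).card + 1 + 1 := Nat.add_le_add_right (Finset.card_insert_le _ _) 1
      _ ≤ 3 := by simp

/-- Let `n = 7m` and let `G` be the balanced blow-up of the complement
of the Fano plane (`c` gives the class of each vertex, each class has size `m`;
a triple is an edge iff its vertices lie in three distinct classes not forming a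
Fano line). Then `G` contains no `J_4`; any two vertices in distinct classes have
co-degree exactly `4m = (4/7)n`; any two vertices in the same class have co-degree `0`;
and the minimum positive co-degree of `G` is exactly `4m`. -/
theorem stmt_6 (m n : ℕ) (hm : 1 ≤ m) (hn : n = 7 * m)
    (c : Fin n → Fin 7)
    (hsize : ∀ i : Fin 7, (Finset.univ.filter (fun v => c v = i)).card = m)
    (G : Finset (Finset (Fin n)))
    (hG : G = Finset.univ.filter (fun e : Finset (Fin n) =>
      e.card = 3 ∧ (e.image c).card = 3 ∧ e.image c ∉ fanoLines)) :
    -- no J_4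
    (¬ ∃ v : Fin 5 → Fin n, Function.Injective v ∧
      ∀ i j : Fin 5, 0 < i → i < j → ({v 0, v i, v j} : Finset (Fin n)) ∈ G) ∧
    -- co-degree of pairs in distinct classes
    (∀ x y : Fin n, x ≠ y → c x ≠ c y →
      (G.filter (fun e => x ∈ e ∧ y ∈ e)).card = 4 * m) ∧
    -- co-degree of pairs in the same class
    (∀ x y : Fin n, x ≠ y → c x = c y →
      (G.filter (fun e => x ∈ e ∧ y ∈ e)).card = 0) ∧
    -- minimum positive co-degree is exactly 4m
    (∀ x y : Fin n, x ≠ y → (∃ e ∈ G, x ∈ e ∧ y ∈ e) →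
      4 * m ≤ (G.filter (fun e => x ∈ e ∧ y ∈ e)).card) ∧
    (∃ x y : Fin n, x ≠ y ∧ (∃ e ∈ G, x ∈ e ∧ y ∈ e) ∧
      (G.filter (fun e => x ∈ e ∧ y ∈ e)).card = 4 * m) := by
  -- helper: extract edge data
  have mem_G : ∀ e : Finset (Fin n), e ∈ G ↔
      e.card = 3 ∧ (e.image c).card = 3 ∧ e.image c ∉ fanoLines := by
    intro e; rw [hG]; simp
  -- co-degree of distinct-class pairs
  have key : ∀ x y : Fin n, x ≠ y → c x ≠ c y →
      (G.filter (fun e => x ∈ e ∧ y ∈ e)).card = 4 * m := by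
    intro x y hxy hcxy
    set S := Finset.univ.filter (fun z : Fin n => c z ≠ c x ∧ c z ≠ c y ∧
      ({c x, c y, c z} : Finset (Fin 7)) ∉ fanoLines) with hS
    have himg : G.filter (fun e => x ∈ e ∧ y ∈ e)
        = S.image (fun z => ({x, y, z} : Finset (Fin n))) := by
      ext e
      simp only [Finset.mem_filter, Finset.mem_image]
      constructor
      · rintro ⟨heG, hxe, hye⟩
        obtain ⟨h3, hic, hnl⟩ := (mem_G e).mp heG
        obtain ⟨z, hzx, hzy, rfl⟩ := third_elt e x y hxe hye hxy h3
        have himg2 : ({x, y, z} : Finset (Fin n)).image c = {c x, c y, c z} := by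
          simp [Finset.image_insert]
        rw [himg2] at hic hnl
        obtain ⟨_, hxz, hyz⟩ := card3_ne _ _ _ hic
        exact ⟨z, by simp [hS, Ne.symm hxz, Ne.symm hyz, hnl], rfl⟩
      · rintro ⟨z, hzS, rfl⟩
        simp only [hS, Finset.mem_filter, Finset.mem_univ, true_and] at hzS
        obtain ⟨h1, h2, h3l⟩ := hzS
        have hzx : z ≠ x := fun h => h1 (by rw [h])
        have hzy : z ≠ y := fun h => h2 (by rw [h])
        have hc3 : ({x, y, z} : Finset (Fin n)).card = 3 :=
          Finset.card_eq_three.mpr ⟨x, y, z, hxy, Ne.symm hzx, Ne.symm hzy, rfl⟩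
        have himg2 : ({x, y, z} : Finset (Fin n)).image c = {c x, c y, c z} := by
          simp [Finset.image_insert]
        refine ⟨(mem_G _).mpr ⟨hc3, ?_, ?_⟩, by simp, by simp⟩
        · rw [himg2]; exact ne_card3 _ _ _ hcxy (Ne.symm h1) (Ne.symm h2)
        · rw [himg2]; exact h3l
    rw [himg, Finset.card_image_of_injOn]
    · -- count S
      have hSb : S = (Finset.univ.filter (fun k : Fin 7 => k ≠ c x ∧ k ≠ c y ∧
          ({c x, c y, k} : Finset (Fin 7)) ∉ fanoLines)).biUnion
          (fun k => Finset.univ.filter (fun z => c z = k)) := by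
        ext z
        simp only [hS, Finset.mem_filter, Finset.mem_biUnion, Finset.mem_univ, true_and]
        constructor
        · rintro ⟨h1, h2, h3⟩; exact ⟨c z, ⟨h1, h2, h3⟩, rfl⟩
        · rintro ⟨k, ⟨h1, h2, h3⟩, rfl⟩; exact ⟨h1, h2, h3⟩
      rw [hSb, Finset.card_biUnion]
      · rw [Finset.sum_congr rfl (fun k _ => hsize k), Finset.sum_const, smul_eq_mul,
          fano_count (c x) (c y) hcxy]
      · intro k _ k' _ hkk'
        simp only [Finset.disjoint_left, Finset.mem_filter, Finset.mem_univ, true_and]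
        rintro z rfl h; exact hkk' h
    · intro z hz z' hz' hzz'
      rw [Finset.mem_coe, hS, Finset.mem_filter] at hz hz'
      obtain ⟨_, h1', h2', _⟩ := hz'
      have hmem : z' ∈ ({x, y, z} : Finset (Fin n)) := by
        rw [show ({x, y, z} : Finset (Fin n)) = {x, y, z'} from hzz']; simp
      simp only [Finset.mem_insert, Finset.mem_singleton] at hmem
      rcases hmem with h | h | h
      · exact absurd (by rw [h]) h1'
      · exact absurd (by rw [h]) h2'
      · exact h.symm
  -- same-class pairs
  have same : ∀ x y : Fin n, x ≠ y → c x = c y →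
      (G.filter (fun e => x ∈ e ∧ y ∈ e)).card = 0 := by
    intro x y hxy hc
    rw [Finset.card_eq_zero, Finset.filter_eq_empty_iff]
    rintro e heG ⟨hxe, hye⟩
    obtain ⟨h3, hic, _⟩ := (mem_G e).mp heG
    obtain ⟨z, _, _, rfl⟩ := third_elt e x y hxe hye hxy h3
    have himg2 : ({x, y, z} : Finset (Fin n)).image c = {c x, c y, c z} := by
      simp [Finset.image_insert]
    rw [himg2] at hic
    exact (card3_ne _ _ _ hic).1 hc
  refine ⟨?_, key, same, ?_, ?_⟩
  · -- no J_4
    rintro ⟨v, hinj, hedges⟩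
    have get : ∀ i j : Fin 5, 0 < i → i < j →
        ({c (v 0), c (v i), c (v j)} : Finset (Fin 7)).card = 3 ∧
        ({c (v 0), c (v i), c (v j)} : Finset (Fin 7)) ∉ fanoLines := by
      intro i j hi hij
      have h := (mem_G _).mp (hedges i j hi hij)
      have himg2 : ({v 0, v i, v j} : Finset (Fin n)).image c
          = {c (v 0), c (v i), c (v j)} := by simp [Finset.image_insert]
      rw [himg2] at h
      exact ⟨h.2.1, h.2.2⟩
    obtain ⟨hc12, hl12⟩ := get 1 2 (by decide) (by decide)
    obtain ⟨hc13, hl13⟩ := get 1 3 (by decide) (by decide)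
    obtain ⟨hc14, hl14⟩ := get 1 4 (by decide) (by decide)
    obtain ⟨hc23, hl23⟩ := get 2 3 (by decide) (by decide)
    obtain ⟨hc24, hl24⟩ := get 2 4 (by decide) (by decide)
    obtain ⟨hc34, hl34⟩ := get 3 4 (by decide) (by decide)
    exact fano_J4 (c (v 0)) (c (v 1)) (c (v 2)) (c (v 3)) (c (v 4))
      hc12 hc13 hc14 hc23 hc24 hc34 hl12 hl13 hl14 hl23 hl24 hl34
  · -- min positive co-degree lower bound
    intro x y hxy ⟨e, heG, hxe, hye⟩
    by_cases hc : c x = c y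
    · exfalso
      have h0 := same x y hxy hc
      rw [Finset.card_eq_zero, Finset.filter_eq_empty_iff] at h0
      exact h0 heG ⟨hxe, hye⟩
    · exact le_of_eq (key x y hxy hc).symm
  · -- existence
    have pick : ∀ i : Fin 7, ∃ v : Fin n, c v = i := by
      intro i
      have hpos : 0 < (Finset.univ.filter (fun v => c v = i)).card := by
        rw [hsize i]; omega
      obtain ⟨v, hv⟩ := Finset.card_pos.mp hpos
      exact ⟨v, (Finset.mem_filter.mp hv).2⟩
    obtain ⟨x, hx⟩ := pick 0
    obtain ⟨y, hy⟩ := pick 1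
    obtain ⟨z, hz⟩ := pick 3
    have hcxy : c x ≠ c y := by rw [hx, hy]; decide
    have hcxz : c x ≠ c z := by rw [hx, hz]; decide
    have hcyz : c y ≠ c z := by rw [hy, hz]; decide
    have hxy : x ≠ y := fun h => hcxy (by rw [h])
    have hxz : x ≠ z := fun h => hcxz (by rw [h])
    have hyz : y ≠ z := fun h => hcyz (by rw [h])
    have himg2 : ({x, y, z} : Finset (Fin n)).image c = ({0, 1, 3} : Finset (Fin 7)) := by
      simp [Finset.image_insert, hx, hy, hz]
    have heG : ({x, y, z} : Finset (Fin n)) ∈ G := by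
      refine (mem_G _).mpr ⟨Finset.card_eq_three.mpr ⟨x, y, z, hxy, hxz, hyz, rfl⟩, ?_, ?_⟩
      · rw [himg2]; decide
      · rw [himg2]; exact notline013
    exact ⟨x, y, hxy, ⟨{x, y, z}, heG, by simp, by simp⟩, key x y hxy hcxy⟩
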